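/- arXiv:1309.5587 — 8 statements merged into one kernel-verified Lean document; each statement's English description precedes it below -/
import Mathlib

section
/- Let H = [I | A] be a parity-check matrix in standard form of a binary linear code of length n, dimension k, and minimum distance greater than 2, where I is the (n−k)×(n−k) identity. Then H is an incidence matrix of a pairwise balanced design of index 1 if and only if A is an incidence matrix of a pairwise balanced design of index 1 containing no block of size 1. -/
/-- `M` is an incidence matrix of a pairwise balanced design of index 1:
every column is nonempty (blocks are nonempty sets of points), and every pair
of distinct points (rows) lies in exactly one common block (column). -/
def IsPBDIncidence {m n : Type} [Fintype m] [Fintype n]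
    (M : Matrix m n (ZMod 2)) : Prop :=
  (∀ j, ∃ i, M i j = 1) ∧ ∀ i i' : m, i ≠ i' → ∃! j, M i j = 1 ∧ M i' j = 1

/-! The identity columns of `[I | A]` are blocks of size one: they are never empty and contain
no pair of points, so `[I | A]` and `A` cover the same pairs, the same number of times. A column
of `A` with a single `1` would repeat a column of `I`, which the distance condition forbids. -/

theorem Sum.existsUnique_iff_of_forall_not_inl {α β : Type*} {P : α ⊕ β → Prop}
    (h : ∀ a, ¬ P (Sum.inl a)) : (∃! x, P x) ↔ ∃! b, P (Sum.inr b) := by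
  constructor
  · rintro ⟨a | b, hb, huniq⟩
    · exact absurd hb (h a)
    · exact ⟨b, hb, fun b' hb' => Sum.inr_injective (huniq (Sum.inr b') hb')⟩
  · rintro ⟨b, hb, huniq⟩
    refine ⟨Sum.inr b, hb, ?_⟩
    rintro (a | b') hb'
    · exact absurd hb' (h a)
    · exact congrArg Sum.inr (huniq b' hb')

theorem exists_eq_piSingle_of_card_filter_eq_one {m : Type*} [Fintype m] [DecidableEq m]
    {v : m → ZMod 2} (h : (Finset.univ.filter fun i => v i = 1).card = 1) :
    ∃ i, v = Pi.single i 1 := by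
  obtain ⟨i, hi⟩ := Finset.card_eq_one.1 h
  refine ⟨i, funext fun i' => ?_⟩
  have hsupp : v i' = 1 ↔ i' = i := by simpa using Finset.ext_iff.1 hi i'
  by_cases hi' : i' = i
  · subst hi'
    simpa using hsupp
  · rw [Pi.single_eq_of_ne hi']
    exact (by decide : ∀ x : ZMod 2, x ≠ 1 → x = 0) _ (hi' ∘ hsupp.1)

theorem Matrix.one_apply_eq_one_iff {m α : Type*} [DecidableEq m] [Zero α] [One α]
    [NeZero (1 : α)] {i j : m} : (1 : Matrix m m α) i j = 1 ↔ i = j := by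
  by_cases h : i = j <;> simp [Matrix.one_apply, h]

namespace Matrix

variable {m n : Type} [DecidableEq m] {A : Matrix m n (ZMod 2)}

theorem existsUnique_fromCols_one_iff {i i' : m} (h : i ≠ i') :
    (∃! j, fromCols (1 : Matrix m m (ZMod 2)) A i j = 1 ∧ fromCols 1 A i' j = 1) ↔
      ∃! j, A i j = 1 ∧ A i' j = 1 :=
  Sum.existsUnique_iff_of_forall_not_inl fun a ⟨ha, ha'⟩ => by
    rw [fromCols_apply_inl, one_apply_eq_one_iff] at ha ha'
    exact h (ha.trans ha'.symm)

theorem isPBDIncidence_fromCols_one_iff [Fintype m] [Fintype n] :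
    IsPBDIncidence (fromCols (1 : Matrix m m (ZMod 2)) A) ↔ IsPBDIncidence A := by
  have hblocks :
      (∀ j, ∃ i, fromCols (1 : Matrix m m (ZMod 2)) A i j = 1) ↔ ∀ j, ∃ i, A i j = 1 := by
    simp [Sum.forall, one_apply_eq_one_iff]
  exact and_congr hblocks (forall₂_congr fun _ _ => forall_congr' existsUnique_fromCols_one_iff)

theorem card_filter_ne_one_of_injective_fromCols_one [Fintype m]
    (hinj : Function.Injective (fromCols (1 : Matrix m m (ZMod 2)) A)ᵀ)
    (j : n) : (Finset.univ.filter fun i => A i j = 1).card ≠ 1 := by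
  intro hcard
  obtain ⟨i, hi⟩ := exists_eq_piSingle_of_card_filter_eq_one hcard
  have hcol : (fromCols (1 : Matrix m m (ZMod 2)) A)ᵀ (Sum.inl i) =
      (fromCols (1 : Matrix m m (ZMod 2)) A)ᵀ (Sum.inr j) := by
    funext i'
    simpa [one_eq_pi_single, Pi.single_comm] using (congrFun hi i').symm
  exact Sum.inl_ne_inr (hinj hcol)

end Matrix

theorem stmt_2_general (r k : ℕ) (A : Matrix (Fin r) (Fin k) (ZMod 2))
    (H : Matrix (Fin r) (Fin r ⊕ Fin k) (ZMod 2))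
    (hH : H = Matrix.fromCols 1 A)
    (hdist : ∀ j j', (∀ i, H i j = H i j') → j = j') :
    IsPBDIncidence H ↔
      (IsPBDIncidence A ∧ ∀ j, (Finset.univ.filter fun i => A i j = 1).card ≠ 1) := by
  subst hH
  rw [Matrix.isPBDIncidence_fromCols_one_iff, iff_self_and]
  exact fun _ => Matrix.card_filter_ne_one_of_injective_fromCols_one
    fun j j' h => hdist j j' (congrFun h)

/-- Let H = [I | A] be a parity-check matrix in standard form of a binary linear code of
length n, dimension k, and minimum distance greater than 2 (no zero column, no two equal
columns). Then H is an incidence matrix of a pairwise balanced design of index 1 iff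
A is an incidence matrix of a pairwise balanced design of index 1 with no block of size 1. -/
theorem stmt_2 (r k : ℕ) (A : Matrix (Fin r) (Fin k) (ZMod 2))
    (H : Matrix (Fin r) (Fin r ⊕ Fin k) (ZMod 2))
    (hH : H = Matrix.fromCols 1 A)
    (hnz : ∀ j, ∃ i, H i j = 1)
    (hdist : ∀ j j', (∀ i, H i j = H i j') → j = j') :
    IsPBDIncidence H ↔
      (IsPBDIncidence A ∧ ∀ j, (Finset.univ.filter fun i => A i j = 1).card ≠ 1) :=
  stmt_2_general r k A H hH hdist
end

section
/- Let A be an (n−k)×k incidence matrix of a nontrivial PBD(n−k, K, 1) with 1 ∉ K, and let H = [I | A]. Then the Tanner graph of H has girth exactly 6, i.e., H contains no 2×2 all-one submatrix but does contain three columns inducing a 6-cycle. -/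
/-!
A column of the identity block of `[I | A]` has a single one, so every 4-cycle of the
Tanner graph lives inside `A`, where it would give two points on two common blocks.
For the 6-cycle, take two points `a, b` of a block `B` and a point `e` outside `B`
(it exists because two distinct blocks share at most one point): the blocks `B`, `be`
and `ea` are pairwise distinct and close the triangle `a, b, e`.
-/

namespace Matrix

variable {m n α : Type*}

section Cycles

variable [One α]

/-- 4-cycles of the Tanner graph of `H`, i.e. 2×2 all-one submatrices. -/
def HasFourCycle (H : Matrix m n α) : Prop :=
  ∃ (i₁ i₂ : m) (j₁ j₂ : n), i₁ ≠ i₂ ∧ j₁ ≠ j₂ ∧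
    H i₁ j₁ = 1 ∧ H i₁ j₂ = 1 ∧ H i₂ j₁ = 1 ∧ H i₂ j₂ = 1

/-- 6-cycles `i₁ - j₁ - i₂ - j₂ - i₃ - j₃ - i₁` of the Tanner graph of `H`. -/
def HasSixCycle (H : Matrix m n α) : Prop :=
  ∃ (i₁ i₂ i₃ : m) (j₁ j₂ j₃ : n),
    [i₁, i₂, i₃].Pairwise (· ≠ ·) ∧ [j₁, j₂, j₃].Pairwise (· ≠ ·) ∧
    H i₁ j₁ = 1 ∧ H i₂ j₁ = 1 ∧ H i₂ j₂ = 1 ∧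
    H i₃ j₂ = 1 ∧ H i₃ j₃ = 1 ∧ H i₁ j₃ = 1

theorem HasSixCycle.fromCols_right {l : Type*} {A : Matrix m n α}
    (B : Matrix m l α) (h : A.HasSixCycle) : (fromCols B A).HasSixCycle := by
  obtain ⟨i₁, i₂, i₃, j₁, j₂, j₃, hi, hj, h₁, h₂, h₃, h₄, h₅, h₆⟩ := h
  have hj' : ([j₁, j₂, j₃].map (Sum.inr (α := l))).Pairwise (· ≠ ·) :=
    hj.map _ fun _ _ => Sum.inr_injective.ne
  exact ⟨i₁, i₂, i₃, .inr j₁, .inr j₂, .inr j₃, hi, hj', h₁, h₂, h₃, h₄, h₅, h₆⟩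

theorem not_hasFourCycle_of_unique_common_col {A : Matrix m n α}
    (hpair : ∀ i i' : m, i ≠ i' → ∃! j, A i j = 1 ∧ A i' j = 1) : ¬ A.HasFourCycle := by
  rintro ⟨i₁, i₂, j₁, j₂, hi, hj, h₁₁, h₁₂, h₂₁, h₂₂⟩
  exact hj ((hpair i₁ i₂ hi).unique ⟨h₁₁, h₂₁⟩ ⟨h₁₂, h₂₂⟩)

end Cycles

section IdentityBlock

variable [Zero α] [One α] [NeZero (1 : α)] [DecidableEq m] {A : Matrix m n α}

theorem exists_eq_inr_of_fromCols_one {i i' : m} (hi : i ≠ i') {j : m ⊕ n}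
    (h : fromCols (1 : Matrix m m α) A i j = 1) (h' : fromCols (1 : Matrix m m α) A i' j = 1) :
    ∃ b, j = .inr b := by
  cases j with
  | inl a =>
    simp only [fromCols_apply_inl, one_apply, ite_eq_left_iff, zero_ne_one, imp_false,
      not_not] at h h'
    exact absurd (h.trans h'.symm) hi
  | inr b => exact ⟨b, rfl⟩

theorem HasFourCycle.of_fromCols_one (h : (fromCols (1 : Matrix m m α) A).HasFourCycle) :
    A.HasFourCycle := by
  obtain ⟨i₁, i₂, j₁, j₂, hi, hj, h₁₁, h₁₂, h₂₁, h₂₂⟩ := h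
  obtain ⟨b₁, rfl⟩ := exists_eq_inr_of_fromCols_one hi h₁₁ h₂₁
  obtain ⟨b₂, rfl⟩ := exists_eq_inr_of_fromCols_one hi h₁₂ h₂₂
  exact ⟨i₁, i₂, b₁, b₂, hi, fun h => hj (congrArg _ h), h₁₁, h₁₂, h₂₁, h₂₂⟩

end IdentityBlock

section LinearSpace

/- Rows of `A` are points, columns are blocks, and `A i j = 1` means that `i` lies on `j`. -/
variable [One α] {A : Matrix m n α}

theorem exists_one_and_ne_one_of_ne
    (hpair : ∀ i i' : m, i ≠ i' → ∃! j, A i j = 1 ∧ A i' j = 1)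
    {c c' : n} (hc : c ≠ c') (hc' : ∃ a b, a ≠ b ∧ A a c' = 1 ∧ A b c' = 1) :
    ∃ e, A e c' = 1 ∧ A e c ≠ 1 := by
  by_contra! hsub
  obtain ⟨a, b, hab, ha, hb⟩ := hc'
  exact hc ((hpair a b hab).unique ⟨hsub a ha, hsub b hb⟩ ⟨ha, hb⟩)

theorem hasSixCycle_of_row_not_one
    (hpair : ∀ i i' : m, i ≠ i' → ∃! j, A i j = 1 ∧ A i' j = 1)
    {c : n} {a b e : m} (hab : a ≠ b)
    (ha : A a c = 1) (hb : A b c = 1) (he : A e c ≠ 1) : A.HasSixCycle := by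
  have hea : e ≠ a := fun h => he (h ▸ ha)
  have heb : e ≠ b := fun h => he (h ▸ hb)
  obtain ⟨jae, ⟨ha_jae, he_jae⟩, -⟩ := hpair a e hea.symm
  obtain ⟨jbe, ⟨hb_jbe, he_jbe⟩, -⟩ := hpair b e heb.symm
  have hc_jae : c ≠ jae := fun h => he (h ▸ he_jae)
  have hc_jbe : c ≠ jbe := fun h => he (h ▸ he_jbe)
  have hjbe_jae : jbe ≠ jae := fun h =>
    hc_jae ((hpair a b hab).unique ⟨ha, hb⟩ ⟨ha_jae, h ▸ hb_jbe⟩)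
  refine ⟨a, b, e, c, jbe, jae, ?_, ?_, ha, hb, hb_jbe, he_jbe, he_jae, ha_jae⟩ <;>
    simp [List.pairwise_cons, *, hea.symm, heb.symm]

theorem hasSixCycle_of_isLinearSpace [Nontrivial n]
    (hpair : ∀ i i' : m, i ≠ i' → ∃! j, A i j = 1 ∧ A i' j = 1)
    (hcol : ∀ j, ∃ a b, a ≠ b ∧ A a j = 1 ∧ A b j = 1) : A.HasSixCycle := by
  obtain ⟨c, c', hc⟩ := exists_pair_ne n
  obtain ⟨a, b, hab, ha, hb⟩ := hcol c
  obtain ⟨e, -, he⟩ := exists_one_and_ne_one_of_ne hpair hc (hcol c')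
  exact hasSixCycle_of_row_not_one hpair hab ha hb he

end LinearSpace

end Matrix

open Matrix in
/-- Let A be an (n−k)×k incidence matrix of a nontrivial PBD(n−k,K,1) with 1 ∉ K
(every block has at least 2 points, every pair of points in exactly one block, more than
one block), and let H = [I | A]. Then the Tanner graph of H has girth exactly 6:
H contains no 2×2 all-one submatrix, but contains three rows and three columns
inducing a 6-cycle. -/
theorem stmt_3 (r k : ℕ) (hk : 2 ≤ k) (A : Matrix (Fin r) (Fin k) (ZMod 2))
    (hcolw : ∀ j, 2 ≤ (Finset.univ.filter fun i => A i j = 1).card)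
    (hpair : ∀ i i' : Fin r, i ≠ i' → ∃! j, A i j = 1 ∧ A i' j = 1)
    (H : Matrix (Fin r) (Fin r ⊕ Fin k) (ZMod 2))
    (hH : H = Matrix.fromCols 1 A) :
    (¬ ∃ (i₁ i₂ : Fin r) (j₁ j₂ : Fin r ⊕ Fin k), i₁ ≠ i₂ ∧ j₁ ≠ j₂ ∧
        H i₁ j₁ = 1 ∧ H i₁ j₂ = 1 ∧ H i₂ j₁ = 1 ∧ H i₂ j₂ = 1) ∧
    (∃ (i₁ i₂ i₃ : Fin r) (j₁ j₂ j₃ : Fin r ⊕ Fin k),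
        [i₁, i₂, i₃].Pairwise (· ≠ ·) ∧ [j₁, j₂, j₃].Pairwise (· ≠ ·) ∧
        H i₁ j₁ = 1 ∧ H i₂ j₁ = 1 ∧ H i₂ j₂ = 1 ∧
        H i₃ j₂ = 1 ∧ H i₃ j₃ = 1 ∧ H i₁ j₃ = 1) := by
  subst hH
  have : Nontrivial (Fin k) := Fin.nontrivial_iff_two_le.mpr hk
  have hcol : ∀ j, ∃ a b, a ≠ b ∧ A a j = 1 ∧ A b j = 1 := fun j => by
    obtain ⟨a, ha, b, hb, hab⟩ := Finset.one_lt_card.mp (hcolw j)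
    simp only [Finset.mem_filter, Finset.mem_univ, true_and] at ha hb
    exact ⟨a, b, hab, ha, hb⟩
  exact ⟨fun h => not_hasFourCycle_of_unique_common_col hpair (HasFourCycle.of_fromCols_one h),
    (hasSixCycle_of_isLinearSpace hpair hcol).fromCols_right 1⟩
end

section
/- Let A be an (n−k)×k incidence matrix of a nontrivial PBD(n−k,K,1) with 1 ∉ K, and let H = [I | A]. Then the binary linear code with parity-check matrix H has minimum distance exactly 1 + min{μ : μ ∈ K}. -/
/-!
Write a word of length `r + k` as `(u, v)`, `u` on the identity block of `H`; it is a codeword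
exactly when `u = A v`. Column `j` of `A` together with the unit vector `e_j` is then a codeword
of weight `1 + μ_j`, where `μ_j` is the size of block `j`. Conversely, if `v j₀ ≠ 0`, every point
`i` of block `j₀` either has `(A v) i ≠ 0` or lies in a second block `j ≠ j₀` of the support of
`v`. Two blocks meet in at most one point, so at most `wt v - 1` points are of the second kind,
and `wt u + wt v ≥ μ_{j₀} + 1`.
-/

open Finset Matrix

variable {m n β : Type*}

lemma hammingNorm_sumElim [Fintype m] [Fintype n] [Zero β] [DecidableEq β]
    (u : m → β) (v : n → β) : hammingNorm (Sum.elim u v) = hammingNorm u + hammingNorm v := by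
  simp only [hammingNorm, card_filter, Fintype.sum_sum_type, Sum.elim_inl, Sum.elim_inr]
  rfl

lemma hammingNorm_single [Fintype n] [DecidableEq n] [Zero β] [DecidableEq β] (j : n) {a : β}
    (ha : a ≠ 0) : hammingNorm (Pi.single j a : n → β) = 1 := by
  simp [hammingNorm, Pi.single_apply, ha, filter_eq']

lemma ZMod.hammingNorm_eq_card_eq_one [Fintype m] (x : m → ZMod 2) :
    hammingNorm x = #{i | x i = 1} := by
  have : ∀ a : ZMod 2, a ≠ 0 ↔ a = 1 := by decide
  simp only [hammingNorm, this]

lemma fromCols_one_mulVec_sumElim_eq_zero_iff [Fintype m] [Fintype n] [DecidableEq m]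
    (A : Matrix m n (ZMod 2)) (u : m → ZMod 2) (v : n → ZMod 2) :
    fromCols 1 A *ᵥ Sum.elim u v = 0 ↔ u = A *ᵥ v := by
  have hneg : -(A *ᵥ v) = A *ᵥ v := funext fun i => ZMod.neg_eq_self_mod_two _
  rw [fromCols_mulVec_sumElim, one_mulVec, add_eq_zero_iff_eq_neg, hneg]

lemma card_common_rows_le_one [Fintype m] {A : Matrix m n (ZMod 2)}
    (hpair : ∀ i i' : m, i ≠ i' → ∃! j, A i j = 1 ∧ A i' j = 1) {j j' : n} (hjj' : j ≠ j') :
    #{i | A i j = 1 ∧ A i j' = 1} ≤ 1 := by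
  refine card_le_one.mpr fun i hi i' hi' => ?_
  simp only [mem_filter, mem_univ, true_and] at hi hi'
  by_contra hii'
  obtain ⟨_, -, huniq⟩ := hpair i i' hii'
  exact hjj' ((huniq j ⟨hi.1, hi'.1⟩).trans (huniq j' ⟨hi.2, hi'.2⟩).symm)

lemma exists_ne_of_mulVec_apply_eq_zero [Fintype n] {A : Matrix m n (ZMod 2)} {v : n → ZMod 2}
    {i : m} {j₀ : n} (hA : A i j₀ = 1) (hv : v j₀ ≠ 0) (hAv : (A *ᵥ v) i = 0) :
    ∃ j ≠ j₀, v j ≠ 0 ∧ A i j = 1 := by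
  by_contra! hother
  have h01 : ∀ a : ZMod 2, a ≠ 1 → a = 0 := by decide
  have hsum : (A *ᵥ v) i = v j₀ := by
    rw [mulVec, dotProduct, sum_eq_single_of_mem j₀ (mem_univ _), hA, one_mul]
    intro j _ hj
    by_cases hvj : v j = 0
    · rw [hvj, mul_zero]
    · rw [h01 _ (hother j hj hvj), zero_mul]
  exact hv (hsum ▸ hAv)

lemma card_col_add_one_le_hammingNorm [Fintype m] [Fintype n] [DecidableEq m] [DecidableEq n]
    {A : Matrix m n (ZMod 2)} (hpair : ∀ i i' : m, i ≠ i' → ∃! j, A i j = 1 ∧ A i' j = 1)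
    {v : n → ZMod 2} {j₀ : n} (hv : v j₀ ≠ 0) :
    #{i | A i j₀ = 1} + 1 ≤ hammingNorm (A *ᵥ v) + hammingNorm v := by
  set S : Finset n := {j | v j ≠ 0}
  have hj₀S : j₀ ∈ S := by simpa [S] using hv
  set T : Finset m := (S.erase j₀).biUnion fun j => {i | A i j₀ = 1 ∧ A i j = 1}
  have hcover : ({i | A i j₀ = 1} : Finset m) ⊆ ({i | (A *ᵥ v) i ≠ 0} : Finset m) ∪ T := by
    intro i hi
    simp only [mem_filter, mem_univ, true_and] at hi
    by_cases hAv : (A *ᵥ v) i = 0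
    · obtain ⟨j, hj, hvj, hAij⟩ := exists_ne_of_mulVec_apply_eq_zero hi hv hAv
      exact mem_union_right _ <|
        mem_biUnion.mpr ⟨j, mem_erase.mpr ⟨hj, by simpa [S] using hvj⟩, by simp [hi, hAij]⟩
    · exact mem_union_left _ (by simpa using hAv)
  have hT : #T ≤ #S - 1 := by
    rw [← card_erase_of_mem hj₀S, ← mul_one #(S.erase j₀)]
    exact card_biUnion_le_card_mul _ _ _ fun j hj =>
      card_common_rows_le_one hpair (ne_of_mem_erase hj).symm
  have hS_pos : 0 < #S := card_pos.mpr ⟨j₀, hj₀S⟩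
  have hcard := (card_le_card hcover).trans (card_union_le _ _)
  change _ ≤ hammingNorm (A *ᵥ v) + _ at hcard
  change _ ≤ _ + #S
  omega

lemma exists_mem_ker_fromCols_one_hammingNorm_eq [Fintype m] [Fintype n] [DecidableEq m]
    [DecidableEq n] (A : Matrix m n (ZMod 2)) (j : n) :
    ∃ x : m ⊕ n → ZMod 2, x ≠ 0 ∧ fromCols 1 A *ᵥ x = 0 ∧
      hammingNorm x = 1 + #{i | A i j = 1} := by
  refine ⟨Sum.elim (A.col j) (Pi.single j 1), fun h => ?_, ?_, ?_⟩
  · simpa using congrFun h (Sum.inr j)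
  · rw [fromCols_one_mulVec_sumElim_eq_zero_iff, mulVec_single_one]
  · rw [hammingNorm_sumElim, ZMod.hammingNorm_eq_card_eq_one (A.col j),
      hammingNorm_single j one_ne_zero, add_comm]
    rfl

lemma exists_card_col_add_one_le_hammingNorm [Fintype m] [Fintype n] [DecidableEq m]
    [DecidableEq n] {A : Matrix m n (ZMod 2)}
    (hpair : ∀ i i' : m, i ≠ i' → ∃! j, A i j = 1 ∧ A i' j = 1) {x : m ⊕ n → ZMod 2}
    (hx0 : x ≠ 0) (hker : fromCols 1 A *ᵥ x = 0) :
    ∃ j, #{i | A i j = 1} + 1 ≤ hammingNorm x := by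
  rw [← Sum.elim_comp_inl_inr x, fromCols_one_mulVec_sumElim_eq_zero_iff] at hker
  obtain ⟨j, hj⟩ : ∃ j, x (Sum.inr j) ≠ 0 := by
    by_contra! hv
    have hv' : x ∘ Sum.inr = 0 := funext hv
    rw [hv', mulVec_zero] at hker
    exact hx0 (by rw [← Sum.elim_comp_inl_inr x, hker, hv', Sum.elim_zero_zero])
  refine ⟨j, ?_⟩
  rw [← Sum.elim_comp_inl_inr x, hammingNorm_sumElim, hker]
  exact card_col_add_one_le_hammingNorm hpair (v := x ∘ Sum.inr) hj

theorem stmt_4_general (r k : ℕ) (A : Matrix (Fin r) (Fin k) (ZMod 2))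
    (hpair : ∀ i i' : Fin r, i ≠ i' → ∃! j, A i j = 1 ∧ A i' j = 1)
    (μmin : ℕ)
    (hmin : ∀ j, μmin ≤ (Finset.univ.filter fun i => A i j = 1).card)
    (hex : ∃ j, (Finset.univ.filter fun i => A i j = 1).card = μmin)
    (H : Matrix (Fin r) (Fin r ⊕ Fin k) (ZMod 2))
    (hH : H = Matrix.fromCols 1 A) :
    IsLeast {w : ℕ | ∃ x : (Fin r ⊕ Fin k) → ZMod 2, x ≠ 0 ∧ H.mulVec x = 0 ∧
      w = (Finset.univ.filter fun j => x j ≠ 0).card} (1 + μmin) := by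
  subst hH
  constructor
  · obtain ⟨j, rfl⟩ := hex
    obtain ⟨x, hx0, hker, hwt⟩ := exists_mem_ker_fromCols_one_hammingNorm_eq A j
    exact ⟨x, hx0, hker, hwt.symm⟩
  · rintro w ⟨x, hx0, hker, rfl⟩
    obtain ⟨j, hj⟩ := exists_card_col_add_one_le_hammingNorm hpair hx0 hker
    have := hmin j
    change _ ≤ hammingNorm x
    omega

/-- Let A be an (n−k)×k incidence matrix of a nontrivial PBD(n−k,K,1) with 1 ∉ K,
and let H = [I | A]. Then the binary linear code with parity-check matrix H has
minimum distance exactly 1 + min{μ : μ ∈ K}, where min{μ : μ ∈ K} is the smallest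
column weight `μmin` of A. The minimum distance is the least Hamming weight of a
nonzero vector in the kernel of H. -/
theorem stmt_4 (r k : ℕ) (hk : 2 ≤ k) (A : Matrix (Fin r) (Fin k) (ZMod 2))
    (hcolw : ∀ j, 2 ≤ (Finset.univ.filter fun i => A i j = 1).card)
    (hpair : ∀ i i' : Fin r, i ≠ i' → ∃! j, A i j = 1 ∧ A i' j = 1)
    (μmin : ℕ)
    (hmin : ∀ j, μmin ≤ (Finset.univ.filter fun i => A i j = 1).card)
    (hex : ∃ j, (Finset.univ.filter fun i => A i j = 1).card = μmin)
    (H : Matrix (Fin r) (Fin r ⊕ Fin k) (ZMod 2))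
    (hH : H = Matrix.fromCols 1 A) :
    IsLeast {w : ℕ | ∃ x : (Fin r ⊕ Fin k) → ZMod 2, x ≠ 0 ∧ H.mulVec x = 0 ∧
      w = (Finset.univ.filter fun j => x j ≠ 0).card} (1 + μmin) :=
  stmt_4_general r k A hpair μmin hmin hex H hH
end

section
/- Every Steiner 2-design S(2,μ,v) is μ-even-free: no nonempty set of at most μ blocks forms an even configuration. -/
/-!
Suppose a nonempty set `C` of at most `μ` blocks were an even configuration, and pick `b ∈ C`.
Each of the `μ` points of `b` lies in an even, hence at least a second, block of `C`. Two
distinct blocks of a Steiner system meet in at most one point, so these other blocks are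
pairwise distinct: `μ ≤ |C| - 1`, a contradiction.
-/

open Finset

section

variable {V : Type*} [DecidableEq V]

def IsEvenConfiguration (C : Finset (Finset V)) : Prop :=
  ∀ p : V, Even (C.filter (p ∈ ·)).card

lemma IsEvenConfiguration.exists_mem_erase {C : Finset (Finset V)} (hC : IsEvenConfiguration C)
    {b : Finset V} (hb : b ∈ C) {p : V} (hp : p ∈ b) : ∃ b' ∈ C.erase b, p ∈ b' := by
  have hbp : b ∈ C.filter (p ∈ ·) := mem_filter.2 ⟨hb, hp⟩
  have htwo : 1 < (C.filter (p ∈ ·)).card := by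
    obtain ⟨k, hk⟩ := hC p
    have := card_pos.2 ⟨b, hbp⟩
    omega
  obtain ⟨b', hb', hne⟩ := exists_mem_ne htwo b
  rw [mem_filter] at hb'
  exact ⟨b', mem_erase.2 ⟨hne, hb'.1⟩, hb'.2⟩

lemma pairwise_card_inter_le_one {B : Finset (Finset V)}
    (hB : ∀ p q : V, p ≠ q → {b | b ∈ B ∧ p ∈ b ∧ q ∈ b}.Subsingleton) :
    (B : Set (Finset V)).Pairwise fun b₁ b₂ => (b₁ ∩ b₂).card ≤ 1 := by
  intro b₁ hb₁ b₂ hb₂ hne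
  rw [card_le_one]
  intro p hp q hq
  by_contra hpq
  rw [mem_inter] at hp hq
  exact hne (hB p q hpq ⟨hb₁, hp.1, hq.1⟩ ⟨hb₂, hp.2, hq.2⟩)

lemma card_le_card_erase_of_pairwise_card_inter_le_one {C : Finset (Finset V)}
    (hC : (C : Set (Finset V)).Pairwise fun b₁ b₂ => (b₁ ∩ b₂).card ≤ 1)
    {b : Finset V} (hb : b ∈ C) (hcover : ∀ p ∈ b, ∃ b' ∈ C.erase b, p ∈ b') :
    b.card ≤ (C.erase b).card :=
  calc b.card ≤ ((C.erase b).biUnion (b ∩ ·)).card := card_le_card fun p hp => by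
        obtain ⟨b', hb', hpb'⟩ := hcover p hp
        exact mem_biUnion.2 ⟨b', hb', mem_inter.2 ⟨hp, hpb'⟩⟩
    _ ≤ ∑ b' ∈ C.erase b, (b ∩ b').card := card_biUnion_le
    _ ≤ ∑ _b' ∈ C.erase b, 1 := sum_le_sum fun b' hb' =>
        hC hb (mem_of_mem_erase hb') (ne_of_mem_erase hb').symm
    _ = (C.erase b).card := by rw [card_eq_sum_ones]

end

theorem stmt_9_general (V : Type) [DecidableEq V] (μ : ℕ)
    (B : Finset (Finset V))
    (hsize : ∀ b ∈ B, b.card = μ)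
    (hpair : ∀ p q : V, p ≠ q → ∃! b, b ∈ B ∧ p ∈ b ∧ q ∈ b) :
    ∀ C ⊆ B, C.Nonempty → C.card ≤ μ →
      ∃ p : V, ¬ Even ((C.filter fun b => p ∈ b).card) := by
  rintro C hCB ⟨b, hb⟩ hcard
  by_contra! hC
  have hlinear : (C : Set (Finset V)).Pairwise fun b₁ b₂ => (b₁ ∩ b₂).card ≤ 1 :=
    (pairwise_card_inter_le_one fun p q hpq _ h₁ _ h₂ => (hpair p q hpq).unique h₁ h₂).mono
      (coe_subset.2 hCB)
  have hle := card_le_card_erase_of_pairwise_card_inter_le_one hlinear hb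
    fun _ hp => IsEvenConfiguration.exists_mem_erase hC hb hp
  rw [card_erase_of_mem hb, hsize b (hCB hb)] at hle
  have := card_pos.2 ⟨b, hb⟩
  omega

/-- Every Steiner 2-design S(2,μ,v) is μ-even-free: no nonempty set of at most μ blocks
forms an even configuration (a configuration in which every point lies in an even number
of its blocks). -/
theorem stmt_9 (V : Type) [Fintype V] [DecidableEq V] (μ : ℕ)
    (B : Finset (Finset V))
    (hsize : ∀ b ∈ B, b.card = μ)
    (hpair : ∀ p q : V, p ≠ q → ∃! b, b ∈ B ∧ p ∈ b ∧ q ∈ b) :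
    ∀ C ⊆ B, C.Nonempty → C.card ≤ μ →
      ∃ p : V, ¬ Even ((C.filter fun b => p ∈ b).card) :=
  stmt_9_general V μ B hsize hpair
end

section
/- If μ is odd, then every r-even-free Steiner 2-design S(2,μ,v) with r even is also (r+1)-even-free. -/
/-!
Every point of an even configuration `C` lies in an even number of its blocks, so counting
incidences point by point shows that `∑ b ∈ C, #b = μ * #C` is even. For odd `μ` this forces
`#C` to be even, so an even configuration of size at most `r + 1` with `r` even has size at
most `r`.
-/

/-- A Steiner 2-design is `r`-even-free if it has no nonempty even configuration of size
at most `r`. -/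
def EvenFree {V : Type} [DecidableEq V] (B : Finset (Finset V)) (r : ℕ) : Prop :=
  ∀ C ⊆ B, C.Nonempty → C.card ≤ r → ∃ p : V, ¬ Even ((C.filter fun b => p ∈ b).card)

open Finset

namespace Finset

variable {V : Type*} [DecidableEq V]

theorem sum_card_filter_mem_sup_eq_sum_card (C : Finset (Finset V)) :
    ∑ p ∈ C.sup id, #{b ∈ C | p ∈ b} = ∑ b ∈ C, #b := by
  refine (sum_card_bipartiteAbove_eq_sum_card_bipartiteBelow (s := C.sup id) (t := C)
    (r := fun p b => p ∈ b)).trans (sum_congr rfl fun b hb => ?_)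
  have hbC : b ⊆ C.sup id := le_sup (f := id) hb
  rw [bipartiteBelow, filter_mem_eq_inter, inter_eq_right.mpr hbC]

theorem even_sum_card_of_forall_even_degree {C : Finset (Finset V)}
    (hdeg : ∀ p, Even #{b ∈ C | p ∈ b}) : Even (∑ b ∈ C, #b) :=
  sum_card_filter_mem_sup_eq_sum_card C ▸ even_sum _ fun p _ => hdeg p

theorem even_card_of_forall_even_degree {C : Finset (Finset V)} {μ : ℕ} (hμ : Odd μ)
    (hsize : ∀ b ∈ C, #b = μ) (hdeg : ∀ p, Even #{b ∈ C | p ∈ b}) : Even #C := by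
  have hsum : ∑ b ∈ C, #b = #C * μ := by rw [sum_congr rfl hsize, sum_const, smul_eq_mul]
  have heven : Even (#C * μ) := hsum ▸ even_sum_card_of_forall_even_degree hdeg
  exact (Nat.even_mul.mp heven).resolve_right (Nat.not_even_iff_odd.mpr hμ)

end Finset

theorem stmt_10_general (V : Type) [DecidableEq V] (μ r : ℕ)
    (hμ : Odd μ) (hr : Even r)
    (B : Finset (Finset V))
    (hsize : ∀ b ∈ B, b.card = μ)
    (hef : EvenFree B r) :
    EvenFree B (r + 1) := by
  intro C hCB hCne hCcard
  by_contra! hdeg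
  have hC : Even #C := even_card_of_forall_even_degree hμ (fun b hb => hsize b (hCB hb)) hdeg
  have hCr : #C ≤ r := by
    rcases Nat.lt_or_eq_of_le hCcard with h | h
    · omega
    · exact absurd (h ▸ hC) (Nat.not_even_iff_odd.mpr hr.add_one)
  obtain ⟨p, hp⟩ := hef C hCB hCne hCr
  exact hp (hdeg p)

/-- If μ is odd, then every r-even-free Steiner 2-design S(2,μ,v) with r even is also
(r+1)-even-free. -/
theorem stmt_10 (V : Type) [Fintype V] [DecidableEq V] (μ r : ℕ)
    (hμ : Odd μ) (hr : Even r)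
    (B : Finset (Finset V))
    (hsize : ∀ b ∈ B, b.card = μ)
    (hpair : ∀ p q : V, p ≠ q → ∃! b, b ∈ B ∧ p ∈ b ∧ q ∈ b)
    (hef : EvenFree B r) :
    EvenFree B (r + 1) :=
  stmt_10_general V μ r hμ hr B hsize hef
end

section
/- Let (V,B) be an r-even-free S(2,μ,v) such that every nonempty configuration C ⊆ B with |C| ≤ r and odd(C) even satisfies |C| + odd(C) ≥ r+1, where odd(C) is the number of points lying in an odd number of blocks of C. Then the PBD(v+1,K,1) obtained by adjoining a new point ∞ and all blocks {∞,x} for x ∈ V is r-even-free. -/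
/-- `oddPts C` is the number of points lying in an odd number of blocks of `C`. -/
def oddPts {V : Type} [Fintype V] [DecidableEq V] (C : Finset (Finset V)) : ℕ :=
  (Finset.univ.filter fun p : V => ¬ Even ((C.filter fun b => p ∈ b).card)).card

open Finset Function

theorem card_filter_image_union {α β γ : Type*} [DecidableEq γ] {f : α → γ} {g : β → γ}
    (hf : Injective f) (hg : Injective g) (hfg : ∀ a b, f a ≠ g b)
    (s : Finset α) (t : Finset β) (q : γ → Prop) [DecidablePred q] :
    ((s.image f ∪ t.image g).filter q).card =
      (s.filter (q ∘ f)).card + (t.filter (q ∘ g)).card := by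
  rw [filter_union, filter_image, filter_image, card_union_of_disjoint,
    card_image_of_injective _ hf, card_image_of_injective _ hg]
  · rfl
  · simp only [disjoint_left, mem_image]
    rintro _ ⟨a, -, rfl⟩ ⟨b, -, hb⟩
    exact hfg a b hb.symm

namespace AdjoinPoint

variable {V : Type} [DecidableEq V]

abbrev degree {α : Type} [DecidableEq α] (C : Finset (Finset α)) (p : α) : ℕ :=
  (C.filter fun b => p ∈ b).card

/-- The pair `{∞, x}`, where the new point `∞` is `none`. -/
def pair (x : V) : Finset (Option V) := {none, some x}

/-- `extend B univ` is the extended design. -/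
def extend (C : Finset (Finset V)) (P : Finset V) : Finset (Finset (Option V)) :=
  C.image (image some) ∪ P.image pair

theorem pair_injective : Injective (pair : V → Finset (Option V)) := fun x y h => by
  simpa [pair] using (Finset.ext_iff.mp h (some x)).mp (by simp [pair])

theorem image_some_injective : Injective (image (some : V → Option V)) :=
  image_injective (Option.some_injective V)

theorem image_some_ne_pair (b : Finset V) (x : V) : b.image some ≠ pair x :=
  fun h => by simpa [pair] using (Finset.ext_iff.mp h none).mpr (by simp [pair])

theorem card_extend (C : Finset (Finset V)) (P : Finset V) :
    (extend C P).card = C.card + P.card := by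
  simpa [extend] using card_filter_image_union image_some_injective pair_injective
    image_some_ne_pair C P fun _ => True

theorem degree_extend_none (C : Finset (Finset V)) (P : Finset V) :
    degree (extend C P) none = P.card := by
  rw [degree, extend, card_filter_image_union image_some_injective pair_injective
    image_some_ne_pair]
  simp [comp_def, pair]

theorem degree_extend_some (C : Finset (Finset V)) (P : Finset V) (p : V) :
    degree (extend C P) (some p) = degree C p + if p ∈ P then 1 else 0 := by
  rw [degree, extend, card_filter_image_union image_some_injective pair_injective
    image_some_ne_pair]
  simp [comp_def, pair, filter_eq, apply_ite card]

theorem exists_eq_extend_of_subset {B : Finset (Finset V)} {S : Finset V}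
    {D : Finset (Finset (Option V))} (hD : D ⊆ extend B S) : ∃ C ⊆ B, ∃ P, D = extend C P := by
  refine ⟨B.filter (image some · ∈ D), filter_subset _ _, S.filter (pair · ∈ D), ?_⟩
  ext d
  constructor
  · intro hd
    rcases mem_union.mp (hD hd) with h | h <;> obtain ⟨x, hx, rfl⟩ := mem_image.mp h <;>
      simp [extend, hx, hd, image_some_injective.eq_iff, pair_injective.eq_iff]
  · simp only [extend, mem_union, mem_image, mem_filter]
    rintro (⟨b, ⟨-, hb⟩, rfl⟩ | ⟨x, ⟨-, hx⟩, rfl⟩) <;> assumption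

variable [Fintype V]

theorem eq_filter_odd_of_even_extend {C : Finset (Finset V)} {P : Finset V}
    (h : ∀ p, Even (degree (extend C P) (some p))) :
    P = univ.filter fun p => ¬ Even (degree C p) := by
  ext p
  have hp := h p
  rw [degree_extend_some] at hp
  by_cases hpP : p ∈ P <;> simpa [hpP, Nat.even_add_one] using hp

end AdjoinPoint

open AdjoinPoint in
theorem stmt_14_general (V : Type) [Fintype V] [DecidableEq V] (r : ℕ)
    (B : Finset (Finset V))
    (hcond : ∀ C ⊆ B, C.Nonempty → C.card ≤ r → Even (oddPts C) →
      r + 1 ≤ C.card + oddPts C) :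
    EvenFree
      ((B.image fun b => b.image (some : V → Option V)) ∪
        (Finset.univ.image fun x : V => ({none, some x} : Finset (Option V)))) r := by
  change EvenFree (extend B univ) r
  intro D hD hne hcard
  by_contra! heven
  obtain ⟨C, hCB, P, rfl⟩ := exists_eq_extend_of_subset hD
  have hP : P.card = oddPts C := by
    rw [eq_filter_odd_of_even_extend fun p => heven (some p), oddPts]
  have hodd : Even (oddPts C) := by simpa [degree_extend_none, hP] using heven none
  have hsize : (extend C P).card = C.card + oddPts C := by rw [card_extend, hP]
  have hC : C.Nonempty := by
    rw [nonempty_iff_ne_empty]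
    rintro rfl
    simpa [hsize, oddPts] using hne.card_pos
  have := hcond C hCB hC (by omega) hodd
  omega

/-- Let (V,B) be an r-even-free S(2,μ,v) such that every nonempty configuration C ⊆ B with
|C| ≤ r and odd(C) even satisfies |C| + odd(C) ≥ r+1. Then the PBD(v+1,K,1) obtained by
adjoining a new point ∞ and all blocks {∞,x} for x ∈ V is r-even-free. -/
theorem stmt_14 (V : Type) [Fintype V] [DecidableEq V] (μ r : ℕ)
    (B : Finset (Finset V))
    (hsize : ∀ b ∈ B, b.card = μ)
    (hpair : ∀ p q : V, p ≠ q → ∃! b, b ∈ B ∧ p ∈ b ∧ q ∈ b)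
    (hef : EvenFree B r)
    (hcond : ∀ C ⊆ B, C.Nonempty → C.card ≤ r → Even (oddPts C) →
      r + 1 ≤ C.card + oddPts C) :
    EvenFree
      ((B.image fun b => b.image (some : V → Option V)) ∪
        (Finset.univ.image fun x : V => ({none, some x} : Finset (Option V)))) r :=
  stmt_14_general V r B hcond
end

section
/- Let H be an incidence matrix of the unique S(2,3,9) (the affine plane AG(2,3)), and let H' be the 10×21 matrix [I | H] with an appended bottom row (1,…,1 | 0,…,0). Then no sum of an even number of rows of H' has Hamming weight 6. -/
/-!
Because `S` has even size, the sum of its rows is unchanged when the bottom row `b` is added to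
every summand, so it is a sum of vectors `g i = H' i + b`. For a point `a`, `g a` has weight
`(9 - 1) + 4 = 12` (every point lies on four lines), and `g a`, `g a'` meet in `7 + 1` coordinates
for `a ≠ a'`. Since `wt (x + y) = wt x + wt y - 2 |x ∩ y|`, a sum of pairwise orthogonal vectors of
weight divisible by `4` again has weight divisible by `4`; so every even sum of rows of `H'` has
weight `≡ 0 [MOD 4]`, never `6`.
-/

open Finset Matrix

section DoublyEven

variable {α : Type*} [Fintype α]

theorem natCast_hammingNorm_eq_sum (x : α → ZMod 2) : (hammingNorm x : ZMod 2) = ∑ i, x i := by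
  rw [hammingNorm, card_filter, Nat.cast_sum]
  have key : ∀ a : ZMod 2, ((if a ≠ 0 then 1 else 0 : ℕ) : ZMod 2) = a := by decide
  exact sum_congr rfl fun i _ => key (x i)

theorem hammingNorm_add_add_two_mul_hammingNorm_mul (x y : α → ZMod 2) :
    hammingNorm (x + y) + 2 * hammingNorm (x * y) = hammingNorm x + hammingNorm y := by
  simp only [hammingNorm, card_filter, mul_sum, ← sum_add_distrib]
  have key : ∀ a b : ZMod 2, ((if a + b ≠ 0 then 1 else 0) + 2 * if a * b ≠ 0 then 1 else 0) =
      (if a ≠ 0 then 1 else 0) + if b ≠ 0 then 1 else 0 := by decide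
  exact sum_congr rfl fun i _ => key (x i) (y i)

theorem ZMod.dotProduct_eq_card (x y : α → ZMod 2) : x ⬝ᵥ y = #{i | x i = 1 ∧ y i = 1} := by
  rw [dotProduct, card_filter, Nat.cast_sum]
  have key : ∀ a b : ZMod 2, a * b = ((if a = 1 ∧ b = 1 then 1 else 0 : ℕ) : ZMod 2) := by decide
  exact sum_congr rfl fun i _ => key (x i) (y i)

theorem four_dvd_hammingNorm_sum {ι : Type*} (v : ι → α → ZMod 2) (s : Finset ι)
    (hv : ∀ i ∈ s, 4 ∣ hammingNorm (v i)) (horth : ∀ i ∈ s, ∀ j ∈ s, v i ⬝ᵥ v j = 0) :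
    4 ∣ hammingNorm (∑ i ∈ s, v i) := by
  classical
  induction s using Finset.induction_on with
  | empty => simp
  | insert a s ha ih =>
    rw [sum_insert ha]
    have hmul : Even (hammingNorm (v a * ∑ i ∈ s, v i)) := by
      rw [← ZMod.natCast_eq_zero_iff_even, natCast_hammingNorm_eq_sum]
      change v a ⬝ᵥ ∑ i ∈ s, v i = 0
      rw [dotProduct_sum]
      exact sum_eq_zero fun j hj => horth a (mem_insert_self a s) j (mem_insert_of_mem hj)
    have hs := ih (fun i hi => hv i (mem_insert_of_mem hi))
      (fun i hi j hj => horth i (mem_insert_of_mem hi) j (mem_insert_of_mem hj))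
    have ha4 := hv a (mem_insert_self a s)
    have := hammingNorm_add_add_two_mul_hammingNorm_mul (v a) (∑ i ∈ s, v i)
    obtain ⟨c, hc⟩ := hmul
    omega

end DoublyEven

theorem hammingNorm_sum_type {α β R : Type*} [Fintype α] [Fintype β] [Zero R] [DecidableEq R]
    (x : α ⊕ β → R) : hammingNorm x = hammingNorm (x ∘ Sum.inl) + hammingNorm (x ∘ Sum.inr) := by
  simp only [hammingNorm, card_filter, Fintype.sum_sum_type, Function.comp_apply]

theorem sum_add_const_of_even_card {ι R : Type*} [Semiring R] [CharP R 2] {s : Finset ι}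
    (hs : Even #s) (v : ι → R) (u : R) : ∑ i ∈ s, (v i + u) = ∑ i ∈ s, v i := by
  obtain ⟨m, hm⟩ := hs
  rw [sum_add_distrib, sum_const, hm, add_nsmul, CharTwo.add_self_eq_zero, add_zero]

section IncidenceMatrix

variable {ι κ : Type*} [DecidableEq ι]

def extendedIncidence (H : Matrix ι κ (ZMod 2)) : Matrix (ι ⊕ Unit) (ι ⊕ κ) (ZMod 2) :=
  fromBlocks 1 H (of fun _ _ => 1) 0

theorem extendedIncidence_bottom_add_bottom (H : Matrix ι κ (ZMod 2)) :
    extendedIncidence H (.inr ()) + extendedIncidence H (.inr ()) = 0 := by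
  ext j
  exact CharTwo.add_self_eq_zero _

variable [Fintype ι] [Fintype κ]

theorem card_filter_row_mul {R : Type*} [DecidableEq R] [One R] (H : Matrix ι κ R) {k : ℕ}
    (hcol : ∀ j, #{i | H i j = 1} = k)
    (hpair : ∀ i i', i ≠ i' → ∃! j, H i j = 1 ∧ H i' j = 1) (i : ι) :
    #{j | H i j = 1} * (k - 1) = Fintype.card ι - 1 := by
  classical
  have := card_mul_eq_card_mul (fun i' j => H i' j = 1) (s := univ.erase i) (t := {j | H i j = 1})
    (m := 1) (n := k - 1) ?_ ?_
  · simpa [card_erase_of_mem] using this.symm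
  · intro i' hi'
    rw [bipartiteAbove, filter_filter]
    convert (Fintype.existsUnique_iff_card_one _).mp (hpair i i' (ne_of_mem_erase hi').symm)
  · intro j hj
    rw [bipartiteBelow, filter_erase, card_erase_of_mem (by simpa using hj), ← hcol j]
    congr

theorem hammingNorm_extendedIncidence_add_bottom (H : Matrix ι κ (ZMod 2)) (a : ι) :
    hammingNorm (extendedIncidence H (.inl a) + extendedIncidence H (.inr ())) =
      (Fintype.card ι - 1) + #{k | H a k = 1} := by
  rw [hammingNorm_sum_type]
  congr 1
  · have key : ∀ c, (1 : Matrix ι ι (ZMod 2)) a c + 1 ≠ 0 ↔ a ≠ c := by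
      intro c
      by_cases h : a = c
      · simpa [h, one_apply] using CharTwo.add_self_eq_zero (1 : ZMod 2)
      · simp [one_apply, h]
    simp only [hammingNorm, extendedIncidence, Function.comp_apply, Pi.add_apply,
      fromBlocks_apply₁₁, fromBlocks_apply₂₁, of_apply, key, filter_ne,
      card_erase_of_mem (mem_univ a), card_univ]
  · have key : ∀ x : ZMod 2, x ≠ 0 ↔ x = 1 := by decide
    simp only [hammingNorm, extendedIncidence, Function.comp_apply, Pi.add_apply,
      fromBlocks_apply₁₂, fromBlocks_apply₂₂, Matrix.zero_apply, add_zero, key]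

theorem dotProduct_extendedIncidence_add_bottom (H : Matrix ι κ (ZMod 2)) (a b : ι) :
    (extendedIncidence H (.inl a) + extendedIncidence H (.inr ())) ⬝ᵥ
      (extendedIncidence H (.inl b) + extendedIncidence H (.inr ())) =
      (if a = b then 1 else 0) + Fintype.card ι + H a ⬝ᵥ H b := by
  simp only [dotProduct, Fintype.sum_sum_type, extendedIncidence, Pi.add_apply,
    fromBlocks_apply₁₁, fromBlocks_apply₁₂, fromBlocks_apply₂₁, fromBlocks_apply₂₂, of_apply,
    one_apply, add_zero, Matrix.zero_apply]
  congr 1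
  simp only [add_mul, mul_add, sum_add_distrib, ite_mul, one_mul, zero_mul, mul_one, sum_ite_eq,
    mem_univ, if_true, sum_const, card_univ, nsmul_eq_mul]
  simp_rw [eq_comm (a := b)]
  linear_combination (CharTwo.two_eq_zero : (2 : ZMod 2) = 0)

end IncidenceMatrix

section AffinePlane

variable {H : Matrix (Fin 9) (Fin 12) (ZMod 2)}

theorem card_filter_row_eq_four (hcolw : ∀ j, #{i | H i j = 1} = 3)
    (hpair : ∀ i i' : Fin 9, i ≠ i' → ∃! j, H i j = 1 ∧ H i' j = 1) (a : Fin 9) :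
    #{k | H a k = 1} = 4 := by
  have := card_filter_row_mul H hcolw hpair a
  simp only [Fintype.card_fin] at this
  omega

theorem four_dvd_hammingNorm_extendedIncidence_add_bottom (hcolw : ∀ j, #{i | H i j = 1} = 3)
    (hpair : ∀ i i' : Fin 9, i ≠ i' → ∃! j, H i j = 1 ∧ H i' j = 1) (i : Fin 9 ⊕ Unit) :
    4 ∣ hammingNorm (extendedIncidence H i + extendedIncidence H (.inr ())) := by
  rcases i with a | ⟨⟩
  · rw [hammingNorm_extendedIncidence_add_bottom, card_filter_row_eq_four hcolw hpair,
      Fintype.card_fin]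
    norm_num
  · rw [extendedIncidence_bottom_add_bottom, hammingNorm_zero]
    exact dvd_zero 4

theorem dotProduct_extendedIncidence_add_bottom_eq_zero (hcolw : ∀ j, #{i | H i j = 1} = 3)
    (hpair : ∀ i i' : Fin 9, i ≠ i' → ∃! j, H i j = 1 ∧ H i' j = 1) (i i' : Fin 9 ⊕ Unit) :
    (extendedIncidence H i + extendedIncidence H (.inr ())) ⬝ᵥ
      (extendedIncidence H i' + extendedIncidence H (.inr ())) = 0 := by
  rcases i with a | ⟨⟩
  · rcases i' with b | ⟨⟩
    · rw [dotProduct_extendedIncidence_add_bottom, ZMod.dotProduct_eq_card, Fintype.card_fin]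
      by_cases hab : a = b
      · subst hab
        simp only [and_self, card_filter_row_eq_four hcolw hpair, if_true]
        decide
      · rw [if_neg hab, (Fintype.existsUnique_iff_card_one _).mp (hpair a b hab)]
        decide
    · rw [extendedIncidence_bottom_add_bottom, dotProduct_zero]
  · rw [extendedIncidence_bottom_add_bottom, zero_dotProduct]

end AffinePlane

/-- Let H be an incidence matrix of the unique S(2,3,9) (the affine plane AG(2,3)): a
9×12 binary matrix whose columns have weight 3 and in which every pair of distinct rows
shares exactly one common support column. Let H' be the 10×21 matrix [I | H] with an
appended bottom row (1,…,1 | 0,…,0). Then no sum of an even number of rows of H' has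
Hamming weight 6. -/
theorem stmt_17 (H : Matrix (Fin 9) (Fin 12) (ZMod 2))
    (hcolw : ∀ j, (Finset.univ.filter fun i => H i j = 1).card = 3)
    (hpair : ∀ i i' : Fin 9, i ≠ i' → ∃! j, H i j = 1 ∧ H i' j = 1)
    (H' : Matrix (Fin 9 ⊕ Unit) (Fin 9 ⊕ Fin 12) (ZMod 2))
    (hH' : H' = Matrix.fromBlocks 1 H (Matrix.of fun _ _ => 1) 0) :
    ∀ S : Finset (Fin 9 ⊕ Unit), Even S.card →
      (Finset.univ.filter fun j => (∑ i ∈ S, H' i j) ≠ 0).card ≠ 6 := by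
  intro S hS
  change _ = extendedIncidence H at hH'
  have hsum : ∑ i ∈ S, H' i = ∑ i ∈ S, (H' i + H' (.inr ())) :=
    (sum_add_const_of_even_card hS _ _).symm
  have h4 : 4 ∣ hammingNorm (∑ i ∈ S, H' i) := by
    rw [hsum, hH']
    exact four_dvd_hammingNorm_sum _ S
      (fun i _ => four_dvd_hammingNorm_extendedIncidence_add_bottom hcolw hpair i)
      (fun i _ i' _ => dotProduct_extendedIncidence_add_bottom_eq_zero hcolw hpair i i')
  have hnorm : #{j | ∑ i ∈ S, H' i j ≠ 0} = hammingNorm (∑ i ∈ S, H' i) := by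
    unfold hammingNorm
    congr! 3 with j
    exact (Finset.sum_apply j S H').symm
  omega
end

section
/- If an abelian group acts transitively on the points of a nontrivial r-even-free Steiner 2-design S(2,μ,v) with v > μ(μ−1)+1, then r ≤ 2μ−1. -/
/-!
Fix a base point `o` and translations `σ x` with `σ x • o = x`; commutativity gives
`σ x • y = σ y • x`, so `(x, y) ↦ σ x • y` behaves like addition `x + y` on the points.
Counting pairs of points, a Steiner system with `v > μ(μ-1)+1` has more than `v` blocks, while
an orbit of blocks has at most `v`; take blocks `ℓ, m` in different orbits. In the multiset of the `2μ`
blocks `ℓ + x` (`x ∈ m`) and `m + y` (`y ∈ ℓ`) a point `q` is covered by each half once for every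
pair `(x, y) ∈ m × ℓ` with `x + y = q`, hence an even number of times, so the blocks of odd
multiplicity form an even configuration of size at most `2μ`. It is nonempty: `m + y` occurs
exactly once, since `m + y = m + y'` with `y ≠ y'` would put `y, y'` on a translate of `m`,
forcing that translate to be `ℓ`.
-/

open Finset MulAction
open scoped Pointwise

namespace Multiset

variable {α : Type*} [DecidableEq α]

def oddSupport (M : Multiset α) : Finset α := M.toFinset.filter fun a => Odd (M.count a)

theorem mem_oddSupport {M : Multiset α} {a : α} : a ∈ M.oddSupport ↔ Odd (M.count a) := by
  rw [oddSupport, Finset.mem_filter, mem_toFinset, and_iff_right_iff_imp]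
  exact fun h => count_pos.mp h.pos

theorem card_oddSupport_le (M : Multiset α) : #M.oddSupport ≤ card M :=
  (card_filter_le _ _).trans (toFinset_card_le M)

theorem even_card_filter_oddSupport_iff (M : Multiset α) (p : α → Prop) [DecidablePred p] :
    Even #(M.oddSupport.filter p) ↔ Even (card (M.filter p)) := by
  rw [← toFinset_sum_count_eq, Finset.even_sum_iff_even_card_odd]
  congr! 2
  ext a
  by_cases ha : p a <;> simp [oddSupport, count_filter, ha, and_comm]

end Multiset

theorem card_mul_eq_of_isSteiner {V : Type*} [Fintype V] [DecidableEq V] {B : Finset (Finset V)}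
    {μ : ℕ} (hsize : ∀ b ∈ B, #b = μ) (hpair : ∀ p q : V, p ≠ q → ∃! b, b ∈ B ∧ p ∈ b ∧ q ∈ b) :
    #B * (μ * (μ - 1)) = Fintype.card V * (Fintype.card V - 1) := by
  have hcover : (univ : Finset V).offDiag = B.biUnion offDiag := by
    ext ⟨p, q⟩
    simp only [mem_offDiag, mem_biUnion, mem_univ, true_and]
    refine ⟨fun hpq => ?_, fun ⟨_, _, _, _, hpq⟩ => hpq⟩
    obtain ⟨b, ⟨hb, hpb, hqb⟩, -⟩ := hpair p q hpq
    exact ⟨b, hb, hpb, hqb, hpq⟩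
  have hdisj : (B : Set (Finset V)).PairwiseDisjoint offDiag := by
    intro b hb c hc hbc
    refine disjoint_left.mpr fun ⟨p, q⟩ hpqb hpqc => hbc ?_
    rw [mem_offDiag] at hpqb hpqc
    exact (hpair p q hpqb.2.2).unique ⟨hb, hpqb.1, hpqb.2.1⟩ ⟨hc, hpqc.1, hpqc.2.1⟩
  rw [Nat.mul_sub_one, Nat.mul_sub_one, ← card_univ, ← offDiag_card, hcover, card_biUnion hdisj,
    sum_congr rfl fun b hb => by rw [offDiag_card, hsize b hb], sum_const, smul_eq_mul]

theorem lt_card_of_isSteiner {V : Type*} [Fintype V] [DecidableEq V] {B : Finset (Finset V)}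
    {μ : ℕ} (hsize : ∀ b ∈ B, #b = μ) (hpair : ∀ p q : V, p ≠ q → ∃! b, b ∈ B ∧ p ∈ b ∧ q ∈ b)
    (hv : μ * (μ - 1) + 1 < Fintype.card V) : Fintype.card V < #B := by
  refine Nat.lt_of_mul_lt_mul_right (a := μ * (μ - 1)) ?_
  rw [card_mul_eq_of_isSteiner hsize hpair]
  exact Nat.mul_lt_mul_of_pos_left (by omega) (by omega)

theorem nonempty_of_mem_of_isSteiner {V : Type*} [Fintype V] {B : Finset (Finset V)} {μ : ℕ}
    (hsize : ∀ b ∈ B, #b = μ) (hpair : ∀ p q : V, p ≠ q → ∃! b, b ∈ B ∧ p ∈ b ∧ q ∈ b)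
    (hV : 1 < Fintype.card V) {b : Finset V} (hb : b ∈ B) : b.Nonempty := by
  obtain ⟨p, q, hpq⟩ := Fintype.exists_pair_of_one_lt_card hV
  obtain ⟨c, ⟨hc, hpc, -⟩, -⟩ := hpair p q hpq
  rw [← card_pos, hsize b hb, ← hsize c hc]
  exact card_pos.mpr ⟨p, hpc⟩

section Translation

variable {V G : Type*} [CommGroup G] [MulAction G V] {σ : V → G} {o : V}

theorem section_smul_comm (hσ : ∀ x, σ x • o = x) (x y : V) : σ x • y = σ y • x := by
  rw [← hσ y, smul_smul, mul_comm, ← smul_smul, hσ, hσ]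

theorem smul_eq_section_smul (hσ : ∀ x, σ x • o = x) (g : G) (z : V) : g • z = σ (g • o) • z := by
  rw [section_smul_comm hσ, ← hσ z, smul_comm, hσ]

theorem inv_section_smul_inv_section_smul (hσ : ∀ x, σ x • o = x) (x q : V) :
    (σ ((σ x)⁻¹ • q))⁻¹ • q = x := by
  rw [inv_smul_eq_iff, section_smul_comm hσ, smul_inv_smul]

variable [DecidableEq V]

theorem orbit_subset_range_section_smul (hσ : ∀ x, σ x • o = x) (s : Finset V) :
    orbit G s ⊆ Set.range fun x => σ x • s := by
  rintro _ ⟨g, rfl⟩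
  exact ⟨g • o, image_congr fun z _ => (smul_eq_section_smul hσ g z).symm⟩

theorem card_filter_mem_section_smul_comm (hσ : ∀ x, σ x • o = x) (ℓ m : Finset V) (q : V) :
    #{x ∈ m | q ∈ σ x • ℓ} = #{y ∈ ℓ | q ∈ σ y • m} := by
  have hmaps : ∀ {s t : Finset V} {x}, x ∈ {x ∈ s | q ∈ σ x • t} →
      (σ x)⁻¹ • q ∈ {y ∈ t | q ∈ σ y • s} := by
    simp only [mem_filter, ← inv_smul_mem_iff, inv_section_smul_inv_section_smul hσ]
    exact fun ⟨hx, hq⟩ => ⟨hq, hx⟩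
  exact card_bij' (fun x _ => (σ x)⁻¹ • q) (fun y _ => (σ y)⁻¹ • q) (fun _ => hmaps)
    (fun _ => hmaps) (fun x _ => inv_section_smul_inv_section_smul hσ x q)
    (fun y _ => inv_section_smul_inv_section_smul hσ y q)

theorem smul_ne_smul_of_notMem_orbit {ℓ m : Finset V} (horb : m ∉ orbit G ℓ) (g h : G) :
    g • ℓ ≠ h • m := fun heq =>
  horb (mem_orbit_iff.mpr ⟨h⁻¹ * g, by rw [mul_smul, heq, inv_smul_smul]⟩)

theorem injOn_section_smul_of_notMem_orbit (hσ : ∀ x, σ x • o = x) {B : Finset (Finset V)}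
    (hpair : ∀ p q : V, p ≠ q → ∃! b, b ∈ B ∧ p ∈ b ∧ q ∈ b) (haut : ∀ g : G, ∀ b ∈ B, g • b ∈ B)
    {ℓ m : Finset V} (hℓ : ℓ ∈ B) (hm : m ∈ B) (horb : m ∉ orbit G ℓ) (hm_ne : m.Nonempty) :
    Set.InjOn (fun y => σ y • m) ℓ := by
  intro y hy y' hy' (heq : σ y • m = σ y' • m)
  by_contra hne
  obtain ⟨z, hz⟩ := hm_ne
  obtain ⟨h, hh⟩ : ∃ h : G, h • z = y' :=
    ⟨σ y' * (σ z)⁻¹, by rw [mul_smul, inv_smul_eq_iff.mpr (hσ z).symm, hσ]⟩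
  have hy'_mem : y' ∈ h • m := hh ▸ smul_mem_smul_finset hz
  have hy_mem : y ∈ h • m := by
    have : σ y • h • z ∈ h • σ y • m :=
      smul_comm h (σ y) z ▸ smul_mem_smul_finset (smul_mem_smul_finset hz)
    rwa [hh, section_smul_comm hσ, heq, smul_comm, smul_mem_smul_finset_iff] at this
  exact smul_ne_smul_of_notMem_orbit horb 1 h <| by
    rw [one_smul]
    exact (hpair y y' hne).unique ⟨hℓ, hy, hy'⟩ ⟨haut h m hm, hy_mem, hy'_mem⟩

end Translation

section Configuration

variable {V G : Type*} [CommGroup G] [MulAction G V] [DecidableEq V] {σ : V → G} {o : V}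
  {ℓ m : Finset V}

def translateConfig (σ : V → G) (ℓ m : Finset V) : Multiset (Finset V) :=
  m.val.map (fun x => σ x • ℓ) + ℓ.val.map (fun y => σ y • m)

theorem card_translateConfig : Multiset.card (translateConfig σ ℓ m) = #m + #ℓ := by
  simp [translateConfig]

theorem mem_of_mem_translateConfig {B : Finset (Finset V)} (haut : ∀ g : G, ∀ b ∈ B, g • b ∈ B)
    (hℓ : ℓ ∈ B) (hm : m ∈ B) {b : Finset V} (hb : b ∈ translateConfig σ ℓ m) : b ∈ B := by
  rcases Multiset.mem_add.mp hb with hb | hb <;> obtain ⟨x, -, rfl⟩ := Multiset.mem_map.mp hb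
  exacts [haut _ ℓ hℓ, haut _ m hm]

theorem even_card_filter_mem_translateConfig (hσ : ∀ x, σ x • o = x) (q : V) :
    Even (Multiset.card ((translateConfig σ ℓ m).filter (q ∈ ·))) := by
  have hcard : ∀ s t : Finset V,
      Multiset.card ((s.val.map fun x => σ x • t).filter (q ∈ ·)) = #{x ∈ s | q ∈ σ x • t} := by
    intro s t
    rw [Multiset.filter_map, Multiset.card_map]
    rfl
  rw [translateConfig, Multiset.filter_add, Multiset.card_add, hcard, hcard,
    card_filter_mem_section_smul_comm hσ]
  exact ⟨_, rfl⟩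

theorem count_translateConfig_eq_one (hσ : ∀ x, σ x • o = x) {B : Finset (Finset V)}
    (hpair : ∀ p q : V, p ≠ q → ∃! b, b ∈ B ∧ p ∈ b ∧ q ∈ b) (haut : ∀ g : G, ∀ b ∈ B, g • b ∈ B)
    (hℓ : ℓ ∈ B) (hm : m ∈ B) (horb : m ∉ orbit G ℓ) (hm_ne : m.Nonempty) {y : V} (hy : y ∈ ℓ) :
    (translateConfig σ ℓ m).count (σ y • m) = 1 := by
  have hfirst : (m.val.map fun x => σ x • ℓ).count (σ y • m) = 0 := by
    refine Multiset.count_eq_zero.mpr fun hmem => ?_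
    obtain ⟨x, -, hx⟩ := Multiset.mem_map.mp hmem
    exact smul_ne_smul_of_notMem_orbit horb _ _ hx
  have hinj := injOn_section_smul_of_notMem_orbit hσ hpair haut hℓ hm horb hm_ne
  rw [translateConfig, Multiset.count_add, hfirst, zero_add,
    Multiset.count_map_eq_count _ _ hinj _ hy, Multiset.count_eq_one_of_mem ℓ.nodup hy]

end Configuration

theorem EvenFree.mono {V : Type} [DecidableEq V] {B : Finset (Finset V)} {r s : ℕ}
    (h : EvenFree B r) (hsr : s ≤ r) : EvenFree B s :=
  fun C hC hne hcard => h C hC hne (hcard.trans hsr)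

theorem not_evenFree_two_mul {V G : Type} [Fintype V] [DecidableEq V] [CommGroup G] [MulAction G V]
    [IsPretransitive G V] {B : Finset (Finset V)} {μ : ℕ} (hsize : ∀ b ∈ B, #b = μ)
    (hpair : ∀ p q : V, p ≠ q → ∃! b, b ∈ B ∧ p ∈ b ∧ q ∈ b) (hB : B.Nonempty)
    (hv : μ * (μ - 1) + 1 < Fintype.card V) (haut : ∀ g : G, ∀ b ∈ B, g • b ∈ B) :
    ¬ EvenFree B (2 * μ) := by
  intro hef
  obtain ⟨o⟩ : Nonempty V := Fintype.card_pos_iff.mp (by omega)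
  choose σ hσ using exists_smul_eq G o
  obtain ⟨ℓ, hℓ⟩ := hB
  obtain ⟨m, hm, horb⟩ : ∃ m ∈ B, m ∉ orbit G ℓ := by
    by_contra! hsub
    have : B ⊆ univ.image fun x => σ x • ℓ := fun b hb => by
      simpa using orbit_subset_range_section_smul hσ ℓ (hsub b hb)
    have := (card_le_card this).trans card_image_le
    exact (lt_card_of_isSteiner hsize hpair hv).not_ge (by simpa using this)
  obtain ⟨y, hy⟩ := nonempty_of_mem_of_isSteiner hsize hpair (by omega) hℓ
  set M := translateConfig σ ℓ m
  have hMB : M.oddSupport ⊆ B := fun b hb => mem_of_mem_translateConfig haut hℓ hm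
    (Multiset.count_pos.mp (Multiset.mem_oddSupport.mp hb).pos)
  have hM_ne : M.oddSupport.Nonempty := ⟨σ y • m, Multiset.mem_oddSupport.mpr <| by
    rw [count_translateConfig_eq_one hσ hpair haut hℓ hm horb
      (nonempty_of_mem_of_isSteiner hsize hpair (by omega) hm) hy]
    exact odd_one⟩
  have hM_card : #M.oddSupport ≤ 2 * μ := by
    have := M.card_oddSupport_le
    rwa [card_translateConfig, hsize ℓ hℓ, hsize m hm, ← two_mul] at this
  obtain ⟨q, hq⟩ := hef _ hMB hM_ne hM_card
  exact hq ((M.even_card_filter_oddSupport_iff _).mpr (even_card_filter_mem_translateConfig hσ q))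

/-- If an abelian group acts transitively on the points of a nontrivial r-even-free
Steiner 2-design S(2,μ,v) with v > μ(μ−1)+1, then r ≤ 2μ−1. -/
theorem stmt_19 (V : Type) [Fintype V] [DecidableEq V] (μ v r : ℕ)
    (B : Finset (Finset V)) (hv : Fintype.card V = v)
    (hsize : ∀ b ∈ B, b.card = μ)
    (hpair : ∀ p q : V, p ≠ q → ∃! b, b ∈ B ∧ p ∈ b ∧ q ∈ b)
    (hnontriv : B.Nonempty ∧ ∀ b ∈ B, b ≠ Finset.univ)
    (hv2 : μ * (μ - 1) + 1 < v)
    (G : Type) [CommGroup G] [MulAction G V]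
    (htrans : MulAction.IsPretransitive G V)
    (haut : ∀ g : G, ∀ b ∈ B, b.image (fun x => g • x) ∈ B)
    (hef : EvenFree B r) :
    r ≤ 2 * μ - 1 := by
  by_contra! hr
  subst hv
  exact not_evenFree_two_mul hsize hpair hnontriv.1 hv2 haut (hef.mono (by omega))
end
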